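/- Let d be a derivation of 𝐧₁ and write d(e₂) = Σ_{j=1}^{3t} β_j e_j. Then the coefficients β_{3k-2} vanish for all 1 ≤ k ≤ t. -/

import Mathlib

/-- Structure constants of `𝐧₁`. -/
def cc (i j : ℕ) : ℤ :=
  if ((i : ℤ) - j) % 3 = 1 then 1 else if ((i : ℤ) - j) % 3 = 2 then -1 else 0

/-!
Apply `d` to `⁅e₅, e₂⁆ = 0`, where `e₅ = -⁅e₂, e₃⁆`, and read off the coefficient of `e_{3k+3}`.
The term `⁅e₅, d e₂⁆` contributes `β_{3k-2}`, the term `⁅⁅d e₂, e₃⁆, e₂⁆` contributes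
`-β_{3k-2}`, and `⁅⁅e₂, d e₃⁆, e₂⁆` contributes nothing since `c_{2,3k-1} = 0`.
Hence `2 β_{3k-2} = 0`.
-/

lemma cc_eq_one {i j : ℕ} (h : ((i : ℤ) - j) % 3 = 1) : cc i j = 1 := by
  simp [cc, h]

lemma cc_eq_neg_one {i j : ℕ} (h : ((i : ℤ) - j) % 3 = 2) : cc i j = -1 := by
  simp [cc, h]

lemma cc_eq_zero {i j : ℕ} (h : ((i : ℤ) - j) % 3 = 0) : cc i j = 0 := by
  simp [cc, h]

lemma cc_swap (i j : ℕ) : cc j i = -cc i j := by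
  unfold cc
  split_ifs <;> omega

namespace Module.Basis

variable {R L : Type*} [CommRing R] [LieRing L] [LieAlgebra R L]
  (b : Basis {n : ℕ // 0 < n} R L)

lemma repr_sum_smul_basis_succ (N : ℕ) (β : ℕ → R) {n : ℕ} (hn : 0 < n) (hnN : n ≤ N) :
    b.repr (∑ j ∈ Finset.range N, β (j + 1) • b ⟨j + 1, j.succ_pos⟩) ⟨n, hn⟩ = β n := by
  obtain ⟨m, rfl⟩ : ∃ m, n = m + 1 := ⟨n - 1, by omega⟩
  simp only [map_sum, map_smul, repr_self, Finsupp.coe_finsetSum, Finset.sum_apply,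
    Finsupp.smul_apply, smul_eq_mul]
  rw [Finset.sum_eq_single m]
  · simp
  · intro j _ hjm
    rw [Finsupp.single_eq_of_ne (by simp; omega), mul_zero]
  · intro hm
    exact absurd (Finset.mem_range.2 (by omega)) hm

variable {b} (hbr : ∀ (i j : ℕ) (hi : 0 < i) (hj : 0 < j),
      ⁅b ⟨i, hi⟩, b ⟨j, hj⟩⁆ = (cc i j : R) • b ⟨i + j, Nat.add_pos_left hi j⟩)
include hbr

lemma repr_basis_lie {i j n : ℕ} (hi : 0 < i) (hj : 0 < j) (hn : 0 < n) (hij : i + j = n)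
    (x : L) : b.repr ⁅b ⟨i, hi⟩, x⁆ ⟨n, hn⟩ = cc i j * b.repr x ⟨j, hj⟩ := by
  let lhs : L →ₗ[R] R := b.coord ⟨n, hn⟩ ∘ₗ LieModule.toEnd R L L (b ⟨i, hi⟩)
  let rhs : L →ₗ[R] R := (cc i j : R) • b.coord ⟨j, hj⟩
  suffices lhs = rhs from LinearMap.congr_fun this x
  refine b.ext fun ⟨l, hl⟩ => ?_
  simp only [lhs, rhs, LinearMap.comp_apply, LieModule.toEnd_apply_apply, hbr, LinearMap.smul_apply,
    coord_apply, map_smul, repr_self, smul_eq_mul]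
  by_cases hjl : j = l
  · subst hjl; subst hij; simp
  · rw [Finsupp.single_eq_of_ne (by simp; omega), Finsupp.single_eq_of_ne (by simp; omega),
      mul_zero, mul_zero]

lemma repr_lie_basis {i j n : ℕ} (hi : 0 < i) (hj : 0 < j) (hn : 0 < n) (hij : i + j = n)
    (x : L) : b.repr ⁅x, b ⟨j, hj⟩⁆ ⟨n, hn⟩ = cc i j * b.repr x ⟨i, hi⟩ := by
  rw [← lie_skew, map_neg, Finsupp.neg_apply, repr_basis_lie hbr hj hi hn (by omega), cc_swap]
  push_cast
  ring

theorem two_mul_repr_derivation_basis_two (d : LieDerivation R L L) (m : ℕ) :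
    2 * b.repr (d (b ⟨2, two_pos⟩)) ⟨3 * m + 1, by omega⟩ = 0 := by
  set e₂ := b ⟨2, two_pos⟩
  set e₃ := b ⟨3, three_pos⟩
  set e₅ := b ⟨5, by norm_num⟩
  have he₅ : e₅ = -⁅e₂, e₃⁆ := by
    rw [hbr, cc_eq_neg_one (by norm_num)]
    simp [e₅]
  have he₅₂ : ⁅e₅, e₂⁆ = 0 := by
    rw [hbr, cc_eq_zero (by norm_num)]
    simp
  have key : ⁅e₅, d e₂⁆ = ⁅⁅d e₂, e₃⁆, e₂⁆ + ⁅⁅e₂, d e₃⁆, e₂⁆ := by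
    have hde₅ : d e₅ = -(⁅e₂, d e₃⁆ + ⁅d e₂, e₃⁆) := by
      rw [he₅, map_neg, d.apply_lie_eq_add]
    have := d.apply_lie_eq_add e₅ e₂
    rw [he₅₂, map_zero, hde₅, neg_lie, add_lie] at this
    linear_combination (norm := module) -this
  set a := b.repr (d e₂) ⟨3 * m + 1, by omega⟩
  have hn : 0 < 3 * m + 6 := by omega
  have h₁ : b.repr ⁅e₅, d e₂⁆ ⟨3 * m + 6, hn⟩ = a := by
    rw [repr_basis_lie hbr (j := 3 * m + 1) _ (by omega) _ (by omega), cc_eq_one (by omega)]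
    simp [a]
  have h₂ : b.repr ⁅⁅d e₂, e₃⁆, e₂⁆ ⟨3 * m + 6, hn⟩ = -a := by
    rw [repr_lie_basis hbr (i := 3 * m + 4) (by omega) _ _ (by omega),
      repr_lie_basis hbr (i := 3 * m + 1) (by omega) _ _ (by omega),
      cc_eq_neg_one (by omega), cc_eq_one (by omega)]
    simp [a]
  have h₃ : b.repr ⁅⁅e₂, d e₃⁆, e₂⁆ ⟨3 * m + 6, hn⟩ = 0 := by
    rw [repr_lie_basis hbr (i := 3 * m + 4) (by omega) _ _ (by omega),
      repr_basis_lie hbr (j := 3 * m + 2) _ (by omega) _ (by omega), cc_eq_zero (i := 2) (by omega)]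
    simp
  have := congrArg (fun y => b.repr y ⟨3 * m + 6, hn⟩) key
  simp only [map_add, Finsupp.add_apply, h₁, h₂, h₃] at this
  linear_combination this

end Module.Basis

/-- if `d` is a derivation of `𝐧₁` and `d(e₂) = Σ_{j=1}^{3t} β_j e_j`, then
`β_{3k-2} = 0` for all `1 ≤ k ≤ t`. -/
theorem statement8 (L : Type*) [LieRing L] [LieAlgebra ℂ L]
    (b : Module.Basis {n : ℕ // 0 < n} ℂ L)
    (hbr : ∀ (i j : ℕ) (hi : 0 < i) (hj : 0 < j),
      ⁅b ⟨i, hi⟩, b ⟨j, hj⟩⁆ = (cc i j : ℂ) • b ⟨i + j, by omega⟩)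
    (d : LieDerivation ℂ L L) (t : ℕ) (β : ℕ → ℂ)
    (h : d (b ⟨2, by omega⟩) =
      ∑ j ∈ Finset.range (3 * t), β (j + 1) • b ⟨j + 1, by omega⟩) :
    ∀ k : ℕ, 1 ≤ k → k ≤ t → β (3 * k - 2) = 0 := by
  intro k hk1 hkt
  obtain ⟨m, rfl⟩ := Nat.exists_eq_add_of_le' hk1
  have h2 := Module.Basis.two_mul_repr_derivation_basis_two hbr d m
  rw [h, Module.Basis.repr_sum_smul_basis_succ b _ β _ (by omega)] at h2
  rw [show 3 * (m + 1) - 2 = 3 * m + 1 by omega]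
  simpa using h2
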